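/- arXiv:2508.16235 — 2 statements merged into one kernel-verified Lean document; each statement's English description precedes it below -/
import Mathlib

section
/- Let H be a real Banach space, let S : [0,∞) → (H →L H) be a strongly continuous contraction semigroup, and let f : H → H be Lipschitz with constant L > 0. Fix u0 ∈ H and T > 0 with L·T < 1. Then there exists a unique continuous function u : [0,T] → H satisfying u(t) = S(t)u0 + ∫_0^t S(t − s)(f(u(s))) ds for all t ∈ [0,T]. -/
/-!
The right-hand side of the mild equation maps `C([0,T], H)` to itself, and because `‖S σ‖ ≤ 1`
and `f` is `L`-Lipschitz it moves sup-distances by a factor at most `L·T < 1`; Banach's fixed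
point theorem gives the unique mild solution. Continuity of the image comes from the joint
continuity of `(σ, x) ↦ S σ x`, which strong continuity and the uniform bound on `‖S σ‖` provide.
-/

open MeasureTheory Set

open scoped NNReal

theorem continuous_apply_of_norm_le {X E F : Type*} [TopologicalSpace X]
    [NormedAddCommGroup E] [NormedSpace ℝ E] [NormedAddCommGroup F] [NormedSpace ℝ F]
    {S : X → E →L[ℝ] F} {C : ℝ≥0} (hS : ∀ σ, ‖S σ‖₊ ≤ C)
    (hS_cont : ∀ x, Continuous fun σ => S σ x) :
    Continuous fun p : X × E => S p.1 p.2 :=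
  continuous_prod_of_continuous_lipschitzWith' _ C
    (fun σ => (S σ).lipschitz.weaken (hS σ)) hS_cont

noncomputable def mildMap {H : Type*} [NormedAddCommGroup H] [NormedSpace ℝ H]
    (S : ℝ → H →L[ℝ] H) (f : H → H) (u0 : H) (u : ℝ → H) (t : ℝ) : H :=
  S t u0 + ∫ s in (0 : ℝ)..t, S (t - s) (f (u s))

section mildMap

variable {H : Type*} [NormedAddCommGroup H] [NormedSpace ℝ H]
  {S : ℝ → H →L[ℝ] H} {f : H → H} {u0 : H} {u v : ℝ → H} {t : ℝ}

theorem mildMap_congr (h : EqOn u v (uIcc 0 t)) : mildMap S f u0 u t = mildMap S f u0 v t := by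
  unfold mildMap
  rw [intervalIntegral.integral_congr fun s hs => by rw [h hs]]

theorem mildMap_congr_semigroup {S' : ℝ → H →L[ℝ] H} (ht : 0 ≤ t) (h : EqOn S S' (Icc 0 t)) :
    mildMap S f u0 u t = mildMap S' f u0 u t := by
  unfold mildMap
  rw [h ⟨ht, le_rfl⟩, intervalIntegral.integral_congr fun s hs => ?_]
  rw [uIcc_of_le ht] at hs
  rw [h ⟨sub_nonneg.2 hs.2, sub_le_self t hs.1⟩]

theorem continuous_mildMap_integrand (hS_cont : Continuous fun p : ℝ × H => S p.1 p.2)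
    (hf : Continuous f) (hu : Continuous u) :
    Continuous fun p : ℝ × ℝ => S (p.1 - p.2) (f (u p.2)) :=
  hS_cont.comp ((continuous_fst.sub continuous_snd).prodMk (hf.comp (hu.comp continuous_snd)))

theorem continuous_mildMap (hS_cont : Continuous fun p : ℝ × H => S p.1 p.2)
    (hf : Continuous f) (hu : Continuous u) : Continuous (mildMap S f u0 u) :=
  (hS_cont.comp (continuous_id.prodMk continuous_const)).add
    (intervalIntegral.continuous_parametric_intervalIntegral_of_continuous
      (continuous_mildMap_integrand hS_cont hf hu) continuous_id)

theorem norm_mildMap_sub_le {K : ℝ≥0} {δ : ℝ} (hS : ∀ σ, ‖S σ‖ ≤ 1)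
    (hS_cont : Continuous fun p : ℝ × H => S p.1 p.2) (hf : LipschitzWith K f)
    (hu : Continuous u) (hv : Continuous v) (ht : 0 ≤ t)
    (huv : ∀ s ∈ Icc 0 t, ‖u s - v s‖ ≤ δ) :
    ‖mildMap S f u0 u t - mildMap S f u0 v t‖ ≤ K * δ * t := by
  have hint : ∀ w : ℝ → H, Continuous w →
      IntervalIntegrable (fun s => S (t - s) (f (w s))) volume 0 t := fun w hw =>
    ((continuous_mildMap_integrand hS_cont hf.continuous hw).comp
      (continuous_const.prodMk continuous_id)).intervalIntegrable 0 t
  have hdiff : mildMap S f u0 u t - mildMap S f u0 v t =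
      ∫ s in (0 : ℝ)..t, S (t - s) (f (u s) - f (v s)) := by
    simp only [mildMap, map_sub, intervalIntegral.integral_sub (hint u hu) (hint v hv)]
    abel
  have hbound : ∀ s ∈ uIoc (0 : ℝ) t, ‖S (t - s) (f (u s) - f (v s))‖ ≤ K * δ := by
    intro s hs
    rw [uIoc_of_le ht] at hs
    calc ‖S (t - s) (f (u s) - f (v s))‖ ≤ ‖f (u s) - f (v s)‖ :=
          (S (t - s)).le_of_opNorm_le (hS _) _ |>.trans_eq (one_mul _)
      _ ≤ K * ‖u s - v s‖ := hf.norm_sub_le _ _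
      _ ≤ K * δ := mul_le_mul_of_nonneg_left (huv s (Ioc_subset_Icc_self hs)) K.2
  rw [hdiff]
  simpa [abs_of_nonneg ht] using intervalIntegral.norm_integral_le_of_norm_le_const hbound

end mildMap

section Picard

variable {H : Type*} [NormedAddCommGroup H] [NormedSpace ℝ H]
  {S : ℝ → H →L[ℝ] H} {f : H → H} {T : ℝ}

/-- Functions on `[0, T]` enter the mild equation through their constant extension to `ℝ`. -/
noncomputable def picardMap (hT : 0 ≤ T) (hS_cont : Continuous fun p : ℝ × H => S p.1 p.2)
    (hf : Continuous f) (u0 : H) (w : C(Icc 0 T, H)) : C(Icc 0 T, H) :=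
  ⟨fun t => mildMap S f u0 (IccExtend hT w) t,
    (continuous_mildMap hS_cont hf (w.IccExtend hT).continuous).comp continuous_subtype_val⟩

theorem isFixedPt_picardMap_iff (hT : 0 ≤ T) (hS_cont : Continuous fun p : ℝ × H => S p.1 p.2)
    (hf : Continuous f) (u0 : H) (w : C(Icc 0 T, H)) :
    Function.IsFixedPt (picardMap hT hS_cont hf u0) w ↔
      ∀ t ∈ Icc 0 T, IccExtend hT w t = mildMap S f u0 (IccExtend hT w) t := by
  rw [Function.IsFixedPt, ContinuousMap.ext_iff, Subtype.forall]
  refine forall₂_congr fun t ht => ?_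
  rw [IccExtend_of_mem hT w ht, eq_comm]
  rfl

theorem contractingWith_picardMap {K : ℝ≥0} (hT : 0 ≤ T) (hS : ∀ σ, ‖S σ‖ ≤ 1)
    (hS_cont : Continuous fun p : ℝ × H => S p.1 p.2) (hf : LipschitzWith K f)
    (hKT : K * T < 1) (u0 : H) :
    ContractingWith (K * T.toNNReal) (picardMap hT hS_cont hf.continuous u0) := by
  have hKT' : ((K * T.toNNReal : ℝ≥0) : ℝ) = K * T := by
    rw [NNReal.coe_mul, Real.coe_toNNReal T hT]
  refine ⟨by rw [← NNReal.coe_lt_coe, hKT']; exact hKT, ?_⟩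
  refine LipschitzWith.of_dist_le_mul fun u v => ?_
  rw [hKT', ContinuousMap.dist_le (by positivity)]
  intro t
  have huv : ∀ s ∈ Icc 0 t.1, ‖IccExtend hT u s - IccExtend hT v s‖ ≤ dist u v := fun s _ => by
    rw [← dist_eq_norm]
    exact ContinuousMap.dist_apply_le_dist (projIcc 0 T hT s)
  calc dist (picardMap hT hS_cont hf.continuous u0 u t) (picardMap hT hS_cont hf.continuous u0 v t)
      ≤ K * dist u v * t.1 := by
        rw [dist_eq_norm]
        exact norm_mildMap_sub_le hS hS_cont hf (u.IccExtend hT).continuous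
          (v.IccExtend hT).continuous t.2.1 huv
    _ ≤ K * T * dist u v := by
        rw [mul_right_comm]
        exact mul_le_mul_of_nonneg_right (mul_le_mul_of_nonneg_left t.2.2 K.2) dist_nonneg

end Picard

theorem exists_mildSolution_unique {H : Type*} [NormedAddCommGroup H] [NormedSpace ℝ H]
    [CompleteSpace H] {S : ℝ → H →L[ℝ] H} {f : H → H} {K : ℝ≥0} {T : ℝ}
    (hS : ∀ σ, ‖S σ‖ ≤ 1) (hS_cont : ∀ x, Continuous fun σ => S σ x) (hf : LipschitzWith K f)
    (hT : 0 ≤ T) (hKT : K * T < 1) (u0 : H) :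
    ∃ u : ℝ → H,
      (ContinuousOn u (Icc 0 T) ∧ ∀ t ∈ Icc 0 T, u t = mildMap S f u0 u t) ∧
      ∀ v : ℝ → H, ContinuousOn v (Icc 0 T) → (∀ t ∈ Icc 0 T, v t = mildMap S f u0 v t) →
        EqOn v u (Icc 0 T) := by
  have hjoint := continuous_apply_of_norm_le (C := 1) (fun σ => NNReal.coe_le_coe.1 (hS σ)) hS_cont
  have hΦ := contractingWith_picardMap hT hS hjoint hf hKT u0
  have : Nonempty (Icc 0 T) := ⟨⟨0, le_rfl, hT⟩⟩
  set w := ContractingWith.fixedPoint _ hΦ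
  refine ⟨IccExtend hT w, ⟨(w.IccExtend hT).continuous.continuousOn,
    (isFixedPt_picardMap_iff hT hjoint hf.continuous u0 w).1 hΦ.fixedPoint_isFixedPt⟩,
    fun v hv hv_eq => ?_⟩
  set vc : C(Icc 0 T, H) := ⟨(Icc 0 T).domRestrict v, hv.domRestrict⟩
  have hvc : EqOn (IccExtend hT vc) v (Icc 0 T) := fun t ht => IccExtend_of_mem hT vc ht
  have hvc_fixed : Function.IsFixedPt (picardMap hT hjoint hf.continuous u0) vc := by
    refine (isFixedPt_picardMap_iff hT hjoint hf.continuous u0 vc).2 fun t ht => ?_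
    rw [hvc ht, hv_eq t ht, mildMap_congr (hvc.symm.mono ?_)]
    rw [uIcc_of_le ht.1]
    exact Icc_subset_Icc_right ht.2
  intro t ht
  rw [← hvc ht, hΦ.fixedPoint_unique hvc_fixed]

theorem mild_solution_exists_unique_general
    {H : Type*} [NormedAddCommGroup H] [NormedSpace ℝ H] [CompleteSpace H]
    (S : ℝ → H →L[ℝ] H)
    (hScontr : ∀ t : ℝ, 0 ≤ t → ‖S t‖ ≤ 1)
    (hScont : ∀ x : H, ContinuousOn (fun t => S t x) (Set.Ici (0 : ℝ)))
    (f : H → H) (L : ℝ) (hL : 0 < L)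
    (hf : ∀ a b : H, ‖f a - f b‖ ≤ L * ‖a - b‖)
    (u0 : H) (T : ℝ) (hT : 0 < T) (hLT : L * T < 1) :
    ∃ u : ℝ → H,
      (ContinuousOn u (Set.Icc 0 T) ∧
        ∀ t ∈ Set.Icc (0 : ℝ) T,
          u t = S t u0 + ∫ s in (0 : ℝ)..t, S (t - s) (f (u s))) ∧
      ∀ v : ℝ → H, ContinuousOn v (Set.Icc 0 T) →
        (∀ t ∈ Set.Icc (0 : ℝ) T,
          v t = S t u0 + ∫ s in (0 : ℝ)..t, S (t - s) (f (v s))) →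
        Set.EqOn v u (Set.Icc 0 T) := by
  -- Only `S` on `[0, ∞)` enters the mild equation, so extend it constantly to the left.
  set S' : ℝ → H →L[ℝ] H := fun σ => S (max σ 0)
  have hS' : ∀ t ∈ Icc 0 T, ∀ u : ℝ → H, mildMap S' f u0 u t = mildMap S f u0 u t :=
    fun t ht u => mildMap_congr_semigroup ht.1 fun σ hσ => by simp [S', max_eq_left hσ.1]
  have hf' : LipschitzWith ⟨L, hL.le⟩ f :=
    LipschitzWith.of_dist_le_mul fun a b => by rw [dist_eq_norm, dist_eq_norm]; exact hf a b
  obtain ⟨u, ⟨hu, hu_eq⟩, hu_unique⟩ := exists_mildSolution_unique (S := S')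
    (fun σ => hScontr _ (le_max_right σ 0))
    (fun x => (hScont x).comp_continuous (continuous_id.max continuous_const) (le_max_right · 0))
    hf' hT.le hLT u0
  exact ⟨u, ⟨hu, fun t ht => (hu_eq t ht).trans (hS' t ht u)⟩,
    fun v hv hv_eq => hu_unique v hv fun t ht => (hv_eq t ht).trans (hS' t ht v).symm⟩

/-- **Existence and uniqueness of mild solutions (small time via Banach fixed point).**
`S` is a strongly continuous contraction semigroup on the Banach space `H`, `f` is
`L`-Lipschitz and `L·T < 1`. Then there exists a continuous `u : [0,T] → H` with
`u(t) = S(t) u0 + ∫_0^t S(t-s)(f(u(s))) ds` for all `t ∈ [0,T]`, and any two such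
continuous mild solutions agree on `[0,T]`. -/
theorem mild_solution_exists_unique
    {H : Type*} [NormedAddCommGroup H] [NormedSpace ℝ H] [CompleteSpace H]
    (S : ℝ → H →L[ℝ] H)
    (hS0 : S 0 = ContinuousLinearMap.id ℝ H)
    (hSadd : ∀ t s : ℝ, 0 ≤ t → 0 ≤ s → S (t + s) = (S t).comp (S s))
    (hScontr : ∀ t : ℝ, 0 ≤ t → ‖S t‖ ≤ 1)
    (hScont : ∀ x : H, ContinuousOn (fun t => S t x) (Set.Ici (0 : ℝ)))
    (f : H → H) (L : ℝ) (hL : 0 < L)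
    (hf : ∀ a b : H, ‖f a - f b‖ ≤ L * ‖a - b‖)
    (u0 : H) (T : ℝ) (hT : 0 < T) (hLT : L * T < 1) :
    ∃ u : ℝ → H,
      (ContinuousOn u (Set.Icc 0 T) ∧
        ∀ t ∈ Set.Icc (0 : ℝ) T,
          u t = S t u0 + ∫ s in (0 : ℝ)..t, S (t - s) (f (u s))) ∧
      ∀ v : ℝ → H, ContinuousOn v (Set.Icc 0 T) →
        (∀ t ∈ Set.Icc (0 : ℝ) T,
          v t = S t u0 + ∫ s in (0 : ℝ)..t, S (t - s) (f (v s))) →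
        Set.EqOn v u (Set.Icc 0 T) :=
  mild_solution_exists_unique_general S hScontr hScont f L hL hf u0 T hT hLT
end

section
/- Let H be a real Banach space, let S : [0,∞) → (H →L H) be a strongly continuous contraction semigroup, and let f : H → H be Lipschitz with constant L > 0. Let T > 0 and u0 ∈ H, and let u, v : [0,T] → H be two continuous mild solutions with the same initial datum u0 (i.e. each satisfies w(t) = S(t)u0 + ∫_0^t S(t − s)(f(w(s))) ds for all t ∈ [0,T]). Then u(t) = v(t) for all t ∈ [0,T]. -/
/-!
Subtracting the two mild formulations and using `‖S τ‖ ≤ 1` and the Lipschitz bound gives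
`‖u t - v t‖ ≤ L ∫₀ᵗ ‖u s - v s‖ ds` on `[0, T]`. The primitive `F t = ∫₀ᵗ ‖u s - v s‖ ds` then
satisfies `F 0 = 0` and `F' ≤ L F`, so Grönwall's inequality forces `F = 0`, hence `u = v`.
The integrals are genuine Bochner integrals rather than the junk value `0`: a uniformly bounded,
strongly continuous family of operators is jointly continuous, so the integrands are continuous.
-/

open MeasureTheory Set Filter Topology
open scoped NNReal

section BoundedStronglyContinuous

variable {E F : Type*} [NormedAddCommGroup E] [NormedSpace ℝ E]
  [NormedAddCommGroup F] [NormedSpace ℝ F] {S : ℝ → E →L[ℝ] F} {M : ℝ}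

theorem continuousOn_apply_of_norm_le {s : Set ℝ} (hSbound : ∀ τ ∈ s, ‖S τ‖ ≤ M)
    (hScont : ∀ x, ContinuousOn (fun τ => S τ x) s) :
    ContinuousOn (fun p : ℝ × E => S p.1 p.2) (s ×ˢ univ) := by
  rintro ⟨τ₀, x₀⟩ ⟨hτ₀, -⟩
  have h_fixed : ContinuousWithinAt (fun p : ℝ × E => S p.1 x₀) (s ×ˢ univ) (τ₀, x₀) :=
    (hScont x₀ τ₀ hτ₀).comp (x := (τ₀, x₀)) (f := Prod.fst) continuousWithinAt_fst mapsTo_fst_prod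
  have h_small : Tendsto (fun p : ℝ × E => S p.1 (p.2 - x₀)) (𝓝[s ×ˢ univ] (τ₀, x₀)) (𝓝 0) := by
    refine squeeze_zero_norm' (a := fun p => M * ‖p.2 - x₀‖) ?_ ?_
    · filter_upwards [self_mem_nhdsWithin] with p hp
      exact (S p.1).le_of_opNorm_le (hSbound _ hp.1) _
    · have : Tendsto (fun p : ℝ × E => M * ‖p.2 - x₀‖) (𝓝 (τ₀, x₀)) (𝓝 (M * ‖x₀ - x₀‖)) :=
        (continuous_const.mul (continuous_snd.sub continuous_const).norm).tendsto _
      simpa using this.mono_left nhdsWithin_le_nhds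
  have h_sum := h_fixed.tendsto.add h_small
  simp only [← map_add, add_sub_cancel, add_zero] at h_sum
  exact h_sum

theorem continuousOn_apply_sub_of_norm_le (hSbound : ∀ τ ∈ Ici 0, ‖S τ‖ ≤ M)
    (hScont : ∀ x, ContinuousOn (fun τ => S τ x) (Ici 0)) {w : ℝ → E} {t : ℝ}
    (hw : ContinuousOn w (Icc 0 t)) : ContinuousOn (fun s => S (t - s) (w s)) (Icc 0 t) :=
  (continuousOn_apply_of_norm_le hSbound hScont).comp
    ((continuous_const.sub continuous_id).continuousOn.prodMk hw)
    fun _ hs => ⟨sub_nonneg.2 hs.2, mem_univ _⟩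

end BoundedStronglyContinuous

theorem norm_sub_le_mul_integral_of_mild {E : Type*} [NormedAddCommGroup E] [NormedSpace ℝ E]
    {S : ℝ → E →L[ℝ] E} {M : ℝ} (hSbound : ∀ τ ∈ Ici 0, ‖S τ‖ ≤ M)
    (hScont : ∀ x, ContinuousOn (fun τ => S τ x) (Ici 0)) {f : E → E} {K : ℝ≥0}
    (hf : LipschitzWith K f) {u0 : E} {u v : ℝ → E} {t : ℝ} (ht : 0 ≤ t)
    (hu : ContinuousOn u (Icc 0 t)) (hv : ContinuousOn v (Icc 0 t))
    (hu_mild : u t = S t u0 + ∫ s in (0 : ℝ)..t, S (t - s) (f (u s)))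
    (hv_mild : v t = S t u0 + ∫ s in (0 : ℝ)..t, S (t - s) (f (v s))) :
    ‖u t - v t‖ ≤ M * K * ∫ s in (0 : ℝ)..t, ‖u s - v s‖ := by
  have hM : 0 ≤ M := (norm_nonneg _).trans (hSbound 0 self_mem_Ici)
  have hint : ∀ w : ℝ → E, ContinuousOn w (Icc 0 t) →
      IntervalIntegrable (fun s => S (t - s) (w s)) volume 0 t := fun w hw =>
    (continuousOn_apply_sub_of_norm_le hSbound hScont hw).intervalIntegrable_of_Icc ht
  have hfu := hf.continuous.comp_continuousOn hu
  have hfv := hf.continuous.comp_continuousOn hv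
  have hdiff : u t - v t = ∫ s in (0 : ℝ)..t, S (t - s) (f (u s) - f (v s)) := by
    rw [hu_mild, hv_mild, add_sub_add_left_eq_sub,
      ← intervalIntegral.integral_sub (hint (fun s => f (u s)) hfu)
      (hint (fun s => f (v s)) hfv)]
    simp only [map_sub]
  have hpointwise : ∀ s ∈ Icc 0 t, ‖S (t - s) (f (u s) - f (v s))‖ ≤ M * K * ‖u s - v s‖ :=
    fun s hs => calc
      _ ≤ M * ‖f (u s) - f (v s)‖ := (S (t - s)).le_of_opNorm_le (hSbound _ (sub_nonneg.2 hs.2)) _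
      _ ≤ M * (K * ‖u s - v s‖) := mul_le_mul_of_nonneg_left (hf.norm_sub_le _ _) hM
      _ = M * K * ‖u s - v s‖ := (mul_assoc _ _ _).symm
  calc ‖u t - v t‖ ≤ ∫ s in (0 : ℝ)..t, ‖S (t - s) (f (u s) - f (v s))‖ :=
        hdiff ▸ intervalIntegral.norm_integral_le_integral_norm ht
    _ ≤ ∫ s in (0 : ℝ)..t, M * K * ‖u s - v s‖ :=
        intervalIntegral.integral_mono_on ht (hint _ (hfu.sub hfv)).norm
          ((continuousOn_const.mul (hu.sub hv).norm).intervalIntegrable_of_Icc ht) hpointwise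
    _ = M * K * ∫ s in (0 : ℝ)..t, ‖u s - v s‖ := intervalIntegral.integral_const_mul _ _

theorem eqOn_zero_of_le_mul_integral {g : ℝ → ℝ} {K a b : ℝ} (hg : ContinuousOn g (Icc a b))
    (hg_nonneg : ∀ x ∈ Icc a b, 0 ≤ g x) (hle : ∀ x ∈ Icc a b, g x ≤ K * ∫ y in a..x, g y) :
    EqOn g 0 (Icc a b) := by
  set G : ℝ → ℝ := fun x => ∫ y in a..x, g y
  have hG_nonneg : ∀ x ∈ Icc a b, 0 ≤ G x := fun x hx =>
    intervalIntegral.integral_nonneg hx.1 fun y hy => hg_nonneg y ⟨hy.1, hy.2.trans hx.2⟩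
  have hG_deriv : ∀ x ∈ Icc a b, HasDerivWithinAt G (g x) (Icc a b) x := fun x hx =>
    have := Fact.mk hx
    intervalIntegral.integral_hasDerivWithinAt_right
      ((hg.mono (Icc_subset_Icc_right hx.2)).intervalIntegrable_of_Icc hx.1)
      (hg.stronglyMeasurableAtFilter_nhdsWithin measurableSet_Icc x) (hg x hx)
  have hG_zero : EqOn G 0 (Icc a b) := by
    refine eq_zero_of_abs_deriv_le_mul_abs_self_of_eq_zero_right (K := K)
      (fun x hx => (hG_deriv x hx).continuousWithinAt)
      (fun x hx => (hG_deriv x (Ico_subset_Icc_self hx)).mono_of_mem_nhdsWithin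
        (mem_of_superset (Icc_mem_nhdsGE hx.2) (Icc_subset_Icc_left hx.1)))
      intervalIntegral.integral_same fun x hx => ?_
    have hx' := Ico_subset_Icc_self hx
    rw [Real.norm_of_nonneg (hg_nonneg x hx'), Real.norm_of_nonneg (hG_nonneg x hx')]
    exact hle x hx'
  intro x hx
  exact le_antisymm (by simpa [G, hG_zero hx] using hle x hx) (hg_nonneg x hx)

theorem mild_solution_unique_general
    {H : Type*} [NormedAddCommGroup H] [NormedSpace ℝ H]
    (S : ℝ → H →L[ℝ] H)
    (hScontr : ∀ t : ℝ, 0 ≤ t → ‖S t‖ ≤ 1)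
    (hScont : ∀ x : H, ContinuousOn (fun t => S t x) (Set.Ici (0 : ℝ)))
    (f : H → H) (L : ℝ)
    (hf : ∀ a b : H, ‖f a - f b‖ ≤ L * ‖a - b‖)
    (T : ℝ) (u0 : H) (u v : ℝ → H)
    (hu_cont : ContinuousOn u (Set.Icc 0 T))
    (hv_cont : ContinuousOn v (Set.Icc 0 T))
    (hu_mild : ∀ t ∈ Set.Icc (0 : ℝ) T,
      u t = S t u0 + ∫ s in (0 : ℝ)..t, S (t - s) (f (u s)))
    (hv_mild : ∀ t ∈ Set.Icc (0 : ℝ) T,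
      v t = S t u0 + ∫ s in (0 : ℝ)..t, S (t - s) (f (v s))) :
    ∀ t ∈ Set.Icc (0 : ℝ) T, u t = v t := by
  have hf_lip : LipschitzWith L.toNNReal f := LipschitzWith.of_dist_le_mul fun a b => by
    simpa only [dist_eq_norm] using
      (hf a b).trans (mul_le_mul_of_nonneg_right (Real.le_coe_toNNReal L) (norm_nonneg _))
  have hestimate : ∀ t ∈ Icc 0 T, ‖u t - v t‖ ≤ 1 * L.toNNReal * ∫ s in (0 : ℝ)..t, ‖u s - v s‖ :=
    fun t ht => norm_sub_le_mul_integral_of_mild hScontr hScont hf_lip ht.1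
      (hu_cont.mono (Icc_subset_Icc_right ht.2)) (hv_cont.mono (Icc_subset_Icc_right ht.2))
      (hu_mild t ht) (hv_mild t ht)
  intro t ht
  exact sub_eq_zero.1 <| norm_eq_zero.1 <|
    eqOn_zero_of_le_mul_integral (hu_cont.sub hv_cont).norm (fun _ _ => norm_nonneg _) hestimate ht

/-- **Global uniqueness of mild solutions.**
If `S` is a strongly continuous contraction semigroup, `f` is `L`-Lipschitz, and
`u, v` are continuous mild solutions on `[0,T]` with the same initial datum `u0`,
then `u = v` on `[0,T]`. -/
theorem mild_solution_unique
    {H : Type*} [NormedAddCommGroup H] [NormedSpace ℝ H] [CompleteSpace H]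
    (S : ℝ → H →L[ℝ] H)
    (hS0 : S 0 = ContinuousLinearMap.id ℝ H)
    (hSadd : ∀ t s : ℝ, 0 ≤ t → 0 ≤ s → S (t + s) = (S t).comp (S s))
    (hScontr : ∀ t : ℝ, 0 ≤ t → ‖S t‖ ≤ 1)
    (hScont : ∀ x : H, ContinuousOn (fun t => S t x) (Set.Ici (0 : ℝ)))
    (f : H → H) (L : ℝ) (hL : 0 < L)
    (hf : ∀ a b : H, ‖f a - f b‖ ≤ L * ‖a - b‖)
    (T : ℝ) (hT : 0 < T) (u0 : H) (u v : ℝ → H)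
    (hu_cont : ContinuousOn u (Set.Icc 0 T))
    (hv_cont : ContinuousOn v (Set.Icc 0 T))
    (hu_mild : ∀ t ∈ Set.Icc (0 : ℝ) T,
      u t = S t u0 + ∫ s in (0 : ℝ)..t, S (t - s) (f (u s)))
    (hv_mild : ∀ t ∈ Set.Icc (0 : ℝ) T,
      v t = S t u0 + ∫ s in (0 : ℝ)..t, S (t - s) (f (v s))) :
    ∀ t ∈ Set.Icc (0 : ℝ) T, u t = v t :=
  mild_solution_unique_general S hScontr hScont f L hf T u0 u v hu_cont hv_cont hu_mild hv_mild
end
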